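/- The map sending a Moore's-Nim_k position (finite multiset of pile sizes) to the sequence, indexed by bit-positions i, of (number of piles with i-th binary digit 1) mod k, is a monoid homomorphism from the free commutative monoid of positions onto a direct sum of copies of Z/kZ, and its kernel-class of 0 is exactly the set of P-positions of Moore's Nim_k. -/

import Mathlib

def MooreMove (k : ℕ) (s t : Multiset ℕ) : Prop :=
  ∃ r r' : Multiset ℕ, r ≤ s ∧ r ≠ 0 ∧ Multiset.card r ≤ k - 1 ∧
    Multiset.Rel (fun a b => b < a) r r' ∧ t = s - r + r'

mutual
inductive MooreP (k : ℕ) : Multiset ℕ → Prop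
  | mk (s : Multiset ℕ) : (∀ t, MooreMove k s t → MooreN k t) → MooreP k s

inductive MooreN (k : ℕ) : Multiset ℕ → Prop
  | mk (s t : Multiset ℕ) : MooreMove k s t → MooreP k t → MooreN k s
end

def mooreDigits (k : ℕ) (s : Multiset ℕ) : ℕ → ZMod k :=
  fun i => (Multiset.card (s.filter (fun a => Nat.testBit a i)) : ZMod k)

/-!
Digit counts mod `k` are additive, and the positions `replicate n (2 ^ i)` realise every digit
vector. For the P-positions it suffices that the zero-digit positions are stable (no move joins
two of them) and absorbing (every other position has a move into them).

A move changes at most `k - 1` piles, so if it preserved every digit count mod `k` it would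
preserve the digit counts of the changed piles exactly, hence their sum, which a move decreases.

Conversely, a move to a zero-digit position is built from the top bit down, selecting at most
`k - 1` piles. A selected pile has already been lowered at a higher bit, so its lower bits are
free. At bit `i`, with `d ≠ 0` the count mod `k` of the unselected piles, either `k - d` of the
selected piles get bit `i` set, or, when fewer than `k - d` piles are selected, `d` further piles
having bit `i` set are selected and lowered by clearing it.
-/

open Multiset

variable {k : ℕ}

theorem Multiset.exists_le_card_eq {α : Type*} {s : Multiset α} {n : ℕ} (h : n ≤ card s) :
    ∃ t ≤ s, card t = n := by
  obtain ⟨t, ht⟩ := card_pos_iff_exists_mem.1 <| by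
    rw [card_powersetCard]; exact Nat.choose_pos h
  exact ⟨t, mem_powersetCard.1 ht⟩

theorem Multiset.sum_lt_sum_of_rel_gt {α : Type*} [AddCommMonoid α] [PartialOrder α]
    [IsOrderedCancelAddMonoid α] {s t : Multiset α} (h : s.Rel (fun a b => b < a) t)
    (hs : s ≠ 0) : t.sum < s.sum := by
  induction h with
  | zero => exact absurd rfl hs
  | cons hab hst _ =>
    rw [sum_cons, sum_cons]
    exact add_lt_add_of_lt_of_le hab
      (sum_le_sum_of_rel_le (rel_flip.2 (hst.mono fun _ _ _ _ => le_of_lt)))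

namespace Nat

theorem testBit_eq_of_div_two_pow_eq {m n j i : ℕ} (h : m / 2 ^ j = n / 2 ^ j) (hi : j ≤ i) :
    m.testBit i = n.testBit i := by
  rw [← Nat.sub_add_cancel hi, ← testBit_div_two_pow, h, testBit_div_two_pow]

theorem testBit_eq_of_mod_two_pow_eq {m n j i : ℕ} (h : m % 2 ^ j = n % 2 ^ j) (hi : i < j) :
    m.testBit i = n.testBit i := by
  simpa [testBit_mod_two_pow, hi] using congrArg (testBit · i) h

theorem testBit_eq_false_of_two_pow_succ_dvd {b i : ℕ} (hb : 2 ^ (i + 1) ∣ b) :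
    b.testBit i = false := by
  rw [testBit_eq_of_mod_two_pow_eq (n := 0) ?_ (lt_add_one i), zero_testBit]
  rw [mod_eq_zero_of_dvd hb, zero_mod]

theorem testBit_add_two_pow_self_of_two_pow_succ_dvd {b i : ℕ} (hb : 2 ^ (i + 1) ∣ b) :
    (b + 2 ^ i).testBit i = true := by
  rw [testBit_eq_of_mod_two_pow_eq (n := 2 ^ i) ?_ (lt_add_one i), testBit_two_pow_self]
  rw [add_mod, mod_eq_zero_of_dvd hb, zero_add, mod_mod]

theorem testBit_add_two_pow_of_two_pow_succ_dvd {b i c : ℕ} (hb : 2 ^ (i + 1) ∣ b) (hc : i < c) :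
    (b + 2 ^ i).testBit c = b.testBit c := by
  refine testBit_eq_of_div_two_pow_eq ?_ hc
  obtain ⟨m, rfl⟩ := hb
  rw [mul_add_div (by positivity), div_eq_of_lt (pow_lt_pow_right₀ one_lt_two (lt_add_one i)),
    add_zero, mul_div_cancel_left₀ _ (by positivity)]

theorem div_two_pow_mul_two_pow_add_two_pow_le {a i : ℕ} (h : a.testBit i) :
    a / 2 ^ (i + 1) * 2 ^ (i + 1) + 2 ^ i ≤ a := by
  have : 2 ^ i ≤ a % 2 ^ (i + 1) := ge_two_pow_of_testBit (by simp [testBit_mod_two_pow, h])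
  have := div_add_mod' a (2 ^ (i + 1))
  omega

theorem sum_range_testBit {a N : ℕ} (h : a < 2 ^ N) :
    ∑ i ∈ Finset.range N, (if a.testBit i then 2 ^ i else 0) = a := by
  rw [← Finset.sum_filter]
  conv_rhs => rw [← Finset.sum_toFinset_bitIndices_two_pow a]
  congr 1
  ext i
  simp only [Finset.mem_filter, Finset.mem_range, List.mem_toFinset, mem_bitIndices,
    and_iff_right_iff_imp]
  exact fun hi => (Nat.pow_lt_pow_iff_right one_lt_two).1 ((ge_two_pow_of_testBit hi).trans_lt h)

end Nat

theorem Multiset.sum_eq_sum_range_card_filter_testBit {s : Multiset ℕ} {N : ℕ}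
    (h : ∀ a ∈ s, a < 2 ^ N) :
    s.sum = ∑ i ∈ Finset.range N, 2 ^ i * card (s.filter fun a => Nat.testBit a i) := by
  induction s using Multiset.induction_on with
  | empty => simp
  | cons a s ih =>
    rw [sum_cons, ih fun b hb => h b (mem_cons_of_mem hb)]
    conv_lhs => rw [← Nat.sum_range_testBit (h a (mem_cons_self a s)), ← Finset.sum_add_distrib]
    refine Finset.sum_congr rfl fun i _ => ?_
    by_cases hi : a.testBit i <;> simp [hi, mul_add, add_comm]

theorem Multiset.sum_eq_of_card_filter_testBit_eq {s t : Multiset ℕ}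
    (h : ∀ i, card (s.filter fun a => Nat.testBit a i) = card (t.filter fun a => Nat.testBit a i)) :
    s.sum = t.sum := by
  have hbound {u : Multiset ℕ} (hu : u ≤ s + t) : ∀ a ∈ u, a < 2 ^ (s + t).sum := fun a ha =>
    Nat.lt_two_pow_self.trans_le <| Nat.pow_le_pow_right two_pos <|
      le_sum_of_mem (mem_of_le hu ha)
  rw [sum_eq_sum_range_card_filter_testBit (hbound (le_add_right s t)),
    sum_eq_sum_range_card_filter_testBit (hbound (le_add_left t s))]
  simp only [h]

theorem mooreDigits_add (s t : Multiset ℕ) :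
    mooreDigits k (s + t) = mooreDigits k s + mooreDigits k t := by
  funext i
  simp [mooreDigits, filter_add]

theorem mooreDigits_eq_zero_of_forall {s : Multiset ℕ} {i : ℕ} (h : ∀ a ∈ s, a.testBit i = false) :
    mooreDigits k s i = 0 := by
  rw [mooreDigits, filter_eq_nil.2 fun a ha => by simp [h a ha], card_zero, Nat.cast_zero]

theorem mooreDigits_eq_card_of_forall {s : Multiset ℕ} {i : ℕ} (h : ∀ a ∈ s, a.testBit i = true) :
    mooreDigits k s i = card s := by
  simp [mooreDigits, filter_eq_self.2 h]

theorem mooreDigits_map_congr {α : Type*} {f g : α → ℕ} {s : Multiset α} {i : ℕ}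
    (h : ∀ x ∈ s, (f x).testBit i = (g x).testBit i) :
    mooreDigits k (s.map f) i = mooreDigits k (s.map g) i := by
  simp only [mooreDigits, filter_map, card_map]
  congr 2
  exact filter_congr fun x hx => by simp [h x hx]

theorem mooreDigits_replicate_two_pow (n a i : ℕ) :
    mooreDigits k (replicate n (2 ^ a)) i = if a = i then (n : ZMod k) else 0 := by
  split_ifs with h
  · rw [mooreDigits_eq_card_of_forall, card_replicate]
    intro x hx
    rw [eq_of_mem_replicate hx, h, Nat.testBit_two_pow_self]
  · refine mooreDigits_eq_zero_of_forall fun x hx => ?_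
    rw [eq_of_mem_replicate hx, Nat.testBit_two_pow_of_ne h]

theorem exists_mooreDigits_eq [NeZero k] (g : ℕ →₀ ZMod k) :
    ∃ s : Multiset ℕ, ∀ i, mooreDigits k s i = g i := by
  induction g using Finsupp.induction with
  | zero => exact ⟨0, fun i => by simp [mooreDigits]⟩
  | single_add a b g _ _ ih =>
    obtain ⟨s, hs⟩ := ih
    refine ⟨replicate b.val (2 ^ a) + s, fun i => ?_⟩
    rw [mooreDigits_add, Pi.add_apply, hs, mooreDigits_replicate_two_pow, Finsupp.add_apply,
      Finsupp.single_apply, ZMod.natCast_zmod_val]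

theorem card_filter_testBit_eq_of_mooreDigits_eq {s t : Multiset ℕ} (hs : card s < k)
    (ht : card t < k) (h : mooreDigits k s = mooreDigits k t) (i : ℕ) :
    card (s.filter fun a => Nat.testBit a i) = card (t.filter fun a => Nat.testBit a i) := by
  have := (ZMod.natCast_eq_natCast_iff' _ _ k).1 (congrFun h i)
  rwa [Nat.mod_eq_of_lt ((card_le_card (filter_le _ s)).trans_lt hs),
    Nat.mod_eq_of_lt ((card_le_card (filter_le _ t)).trans_lt ht)] at this

theorem MooreMove.sum_lt {s t : Multiset ℕ} (h : MooreMove k s t) : t.sum < s.sum := by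
  obtain ⟨r, r', hrs, hr, -, hrel, rfl⟩ := h
  obtain ⟨u, rfl⟩ := exists_add_of_le hrs
  rw [add_tsub_cancel_left, sum_add, sum_add, add_comm]
  exact add_lt_add_left (sum_lt_sum_of_rel_gt hrel hr) _

theorem MooreP.not_mooreN {s : Multiset ℕ} : MooreP k s → ¬ MooreN k s
  | .mk _ hP, .mk _ t hst hPt => hPt.not_mooreN (hP t hst)
termination_by s.sum
decreasing_by exact hst.sum_lt

section Kernel

variable {Z : Multiset ℕ → Prop}

theorem mooreP_and_mooreN_of_kernel (hZ : ∀ s t, MooreMove k s t → Z s → ¬ Z t)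
    (hZc : ∀ s, ¬ Z s → ∃ t, MooreMove k s t ∧ Z t) (s : Multiset ℕ) :
    (Z s → MooreP k s) ∧ (¬ Z s → MooreN k s) :=
  ⟨fun hs => .mk s fun t hst => (mooreP_and_mooreN_of_kernel hZ hZc t).2 (hZ s t hst hs), fun hs =>
    let ⟨t, hst, ht⟩ := hZc s hs
    .mk s t hst ((mooreP_and_mooreN_of_kernel hZ hZc t).1 ht)⟩
termination_by s.sum
decreasing_by all_goals exact hst.sum_lt

theorem mooreP_iff_of_kernel (hZ : ∀ s t, MooreMove k s t → Z s → ¬ Z t)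
    (hZc : ∀ s, ¬ Z s → ∃ t, MooreMove k s t ∧ Z t) (s : Multiset ℕ) : MooreP k s ↔ Z s :=
  ⟨fun hP => by_contra fun hs => hP.not_mooreN ((mooreP_and_mooreN_of_kernel hZ hZc s).2 hs),
    (mooreP_and_mooreN_of_kernel hZ hZc s).1⟩

end Kernel

theorem MooreMove.mooreDigits_ne_zero {s t : Multiset ℕ} (h : MooreMove k s t)
    (hs : mooreDigits k s = 0) : mooreDigits k t ≠ 0 := by
  obtain ⟨r, r', hrs, hr, hcard, hrel, rfl⟩ := h
  obtain ⟨u, rfl⟩ := exists_add_of_le hrs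
  intro ht
  rw [add_tsub_cancel_left, mooreDigits_add] at ht
  rw [mooreDigits_add] at hs
  have hdigits : mooreDigits k r = mooreDigits k r' := by linear_combination hs - ht
  have hrk : card r < k := by have := card_pos.2 hr; omega
  have hr'k : card r' < k := card_eq_card_of_rel hrel ▸ hrk
  have hsum := sum_eq_of_card_filter_testBit_eq
    (card_filter_testBit_eq_of_mooreDigits_eq hrk hr'k hdigits)
  exact (sum_lt_sum_of_rel_gt hrel hr).ne' hsum

/-- A winning move under construction down to bit `i`: `u` are the untouched piles and each
`(a, b) ∈ p` is a pile `a` that will be lowered to `b` plus some value below `2 ^ i`. -/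
def PartialMove (k i : ℕ) (u : Multiset ℕ) (p : Multiset (ℕ × ℕ)) : Prop :=
  card p ≤ k - 1 ∧ (∀ x ∈ p, 2 ^ i ∣ x.2 ∧ x.2 + 2 ^ i ≤ x.1) ∧
    ∀ c, i ≤ c → mooreDigits k (u + p.map Prod.snd) c = 0

theorem PartialMove.exists_lift [NeZero k] {i : ℕ} {u : Multiset ℕ} {p : Multiset (ℕ × ℕ)}
    (h : PartialMove k (i + 1) u p) (hd : (-mooreDigits k u i).val ≤ card p) :
    ∃ q, q.map Prod.fst = p.map Prod.fst ∧ PartialMove k i u q := by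
  obtain ⟨hcard, hpairs, hdigits⟩ := h
  obtain ⟨p₁, hp₁, hcard₁⟩ := exists_le_card_eq hd
  obtain ⟨p₂, rfl⟩ := exists_add_of_le hp₁
  have hdvd₁ : ∀ x ∈ p₁, 2 ^ (i + 1) ∣ x.2 := fun x hx => (hpairs x (mem_add.2 (.inl hx))).1
  have hdvd₂ : ∀ x ∈ p₂, 2 ^ (i + 1) ∣ x.2 := fun x hx => (hpairs x (mem_add.2 (.inr hx))).1
  refine ⟨p₁.map (fun x => (x.1, x.2 + 2 ^ i)) + p₂, by simp [map_map],
    by simpa using hcard, fun x hx => ?_, fun c hc => ?_⟩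
  · rw [mem_add, mem_map] at hx
    rcases hx with ⟨y, hy, rfl⟩ | hx
    · obtain ⟨hdvd, hle⟩ := hpairs y (mem_add.2 (.inl hy))
      rw [pow_succ] at hdvd hle
      exact ⟨dvd_add (dvd_of_mul_right_dvd hdvd) dvd_rfl, by dsimp only; omega⟩
    · obtain ⟨hdvd, hle⟩ := hpairs x (mem_add.2 (.inr hx))
      rw [pow_succ] at hdvd hle
      exact ⟨dvd_of_mul_right_dvd hdvd, by omega⟩
  simp only [Multiset.map_add, map_map, Function.comp_def, mooreDigits_add, Pi.add_apply]
  rcases hc.eq_or_lt with rfl | hc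
  · have h₁ : mooreDigits k (p₁.map fun x => x.2 + 2 ^ i) i = card p₁ := by
      rw [mooreDigits_eq_card_of_forall (forall_mem_map_iff.2 fun x hx =>
        Nat.testBit_add_two_pow_self_of_two_pow_succ_dvd (hdvd₁ x hx)), card_map]
    have h₂ : mooreDigits k (p₂.map Prod.snd) i = 0 := mooreDigits_eq_zero_of_forall
      (forall_mem_map_iff.2 fun x hx => Nat.testBit_eq_false_of_two_pow_succ_dvd (hdvd₂ x hx))
    rw [h₁, h₂, hcard₁, ZMod.natCast_zmod_val, add_zero, add_neg_cancel]
  · have := hdigits c hc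
    simp only [Multiset.map_add, mooreDigits_add, Pi.add_apply] at this
    rwa [mooreDigits_map_congr fun x hx =>
      Nat.testBit_add_two_pow_of_two_pow_succ_dvd (hdvd₁ x hx) hc]

theorem PartialMove.exists_select [NeZero k] {i : ℕ} {u : Multiset ℕ} {p : Multiset (ℕ × ℕ)}
    (h : PartialMove k (i + 1) u p) (hd : card p < (-mooreDigits k u i).val) :
    ∃ w v q, u = w + v ∧ q.map Prod.fst = p.map Prod.fst + w ∧ PartialMove k i v q := by
  obtain ⟨hcard, hpairs, hdigits⟩ := h
  have hd₀ : mooreDigits k u i ≠ 0 := fun h₀ => by simp [h₀] at hd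
  rw [ZMod.neg_val, if_neg hd₀] at hd
  have hdu : (mooreDigits k u i).val ≤ card (u.filter fun a => a.testBit i) := by
    rw [mooreDigits, ZMod.val_natCast]
    exact Nat.mod_le _ _
  obtain ⟨w, hw, hcardw⟩ := exists_le_card_eq hdu
  obtain ⟨v, rfl⟩ := exists_add_of_le (hw.trans (filter_le _ u))
  have hwbit : ∀ a ∈ w, a.testBit i := fun a ha => (mem_filter.1 (mem_of_le hw ha)).2
  refine ⟨w, v, p + w.map fun a => (a, a / 2 ^ (i + 1) * 2 ^ (i + 1)), rfl, by simp [map_map],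
    by simp; omega, fun x hx => ?_, fun c hc => ?_⟩
  · rw [mem_add, mem_map] at hx
    rcases hx with hx | ⟨a, ha, rfl⟩
    · obtain ⟨hdvd, hle⟩ := hpairs x hx
      rw [pow_succ] at hdvd hle
      exact ⟨dvd_of_mul_right_dvd hdvd, by omega⟩
    · exact ⟨Dvd.dvd.mul_left (pow_dvd_pow 2 (Nat.le_succ i)) _,
        Nat.div_two_pow_mul_two_pow_add_two_pow_le (hwbit a ha)⟩
  have hdvd : ∀ x ∈ p, 2 ^ (i + 1) ∣ x.2 := fun x hx => (hpairs x hx).1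
  simp only [Multiset.map_add, map_map, Function.comp_def, mooreDigits_add, Pi.add_apply]
  rcases hc.eq_or_lt with rfl | hc
  · have hw' : mooreDigits k w i = mooreDigits k (w + v) i := by
      rw [mooreDigits_eq_card_of_forall hwbit, hcardw, ZMod.natCast_zmod_val]
    rw [mooreDigits_add, Pi.add_apply, left_eq_add] at hw'
    rw [hw', mooreDigits_eq_zero_of_forall (forall_mem_map_iff.2 fun x hx =>
      Nat.testBit_eq_false_of_two_pow_succ_dvd (hdvd x hx)), mooreDigits_eq_zero_of_forall
      (forall_mem_map_iff.2 fun a _ => Nat.testBit_eq_false_of_two_pow_succ_dvd (dvd_mul_left _ _))]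
    simp
  · have := hdigits c hc
    simp only [mooreDigits_add, Pi.add_apply] at this
    rw [mooreDigits_map_congr (f := fun a => a / 2 ^ (i + 1) * 2 ^ (i + 1)) (g := id)
      fun a _ => Nat.testBit_eq_of_div_two_pow_eq
      (Nat.mul_div_cancel _ (by positivity)) hc, map_id, ← this]
    ring

theorem PartialMove.exists_complete [NeZero k] {i : ℕ} {u : Multiset ℕ} {p : Multiset (ℕ × ℕ)}
    (h : PartialMove k i u p) :
    ∃ w v q, u = w + v ∧ q.map Prod.fst = p.map Prod.fst + w ∧ PartialMove k 0 v q := by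
  induction i generalizing u p with
  | zero => exact ⟨0, u, p, (zero_add u).symm, (add_zero _).symm, h⟩
  | succ i ih =>
    by_cases hd : (-mooreDigits k u i).val ≤ card p
    · obtain ⟨q, hq, h'⟩ := h.exists_lift hd
      obtain ⟨w, v, q', rfl, hq', h''⟩ := ih h'
      exact ⟨w, v, q', rfl, hq'.trans (by rw [hq]), h''⟩
    · obtain ⟨w, v, q, rfl, hq, h'⟩ := h.exists_select (not_le.1 hd)
      obtain ⟨w', v', q', rfl, hq', h''⟩ := ih h'
      exact ⟨w + w', v', q', (add_assoc _ _ _).symm, by rw [hq', hq, add_assoc], h''⟩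

theorem exists_mooreMove_mooreDigits_eq_zero [NeZero k] {s : Multiset ℕ}
    (hs : mooreDigits k s ≠ 0) : ∃ t, MooreMove k s t ∧ mooreDigits k t = 0 := by
  have hstart : PartialMove k s.sum s 0 := by
    refine ⟨by simp, by simp, fun c hc => ?_⟩
    rw [map_zero, add_zero]
    exact mooreDigits_eq_zero_of_forall fun a ha => Nat.testBit_lt_two_pow <|
      (le_sum_of_mem ha).trans_lt (Nat.lt_two_pow_self.trans_le (Nat.pow_le_pow_right two_pos hc))
  obtain ⟨w, v, q, rfl, hq, hcard, hpairs, hdigits⟩ := hstart.exists_complete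
  rw [map_zero, zero_add] at hq
  have ht : mooreDigits k (v + q.map Prod.snd) = 0 := funext fun c => hdigits c c.zero_le
  refine ⟨v + q.map Prod.snd, ⟨q.map Prod.fst, q.map Prod.snd, ?_, ?_, ?_, ?_, ?_⟩, ht⟩
  · rw [hq]
    exact le_add_right w v
  · intro h₀
    obtain rfl : q = 0 := Multiset.map_eq_zero.1 h₀
    obtain rfl : w = 0 := by simpa using hq.symm
    exact hs (by simpa using ht)
  · rwa [card_map]
  · exact rel_map.2 (rel_refl_of_refl_on fun x hx => by simpa using (hpairs x hx).2)
  · rw [hq, add_tsub_cancel_left]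

/-- The map `mooreDigits k` is a monoid homomorphism from the free commutative
monoid of positions onto the direct sum of copies of `ℤ/kℤ` (the finitely
supported functions `ℕ →₀ ZMod k`), and (for `k ≥ 2`) its kernel-class of `0`
is exactly the set of P-positions of Moore's Nim_k. -/
theorem stmt8 (k : ℕ) (hk : 2 ≤ k) :
    (∀ s t : Multiset ℕ, ∀ i : ℕ,
      mooreDigits k (s + t) i = mooreDigits k s i + mooreDigits k t i) ∧
    (∀ g : ℕ →₀ ZMod k, ∃ s : Multiset ℕ, ∀ i : ℕ, mooreDigits k s i = g i) ∧
    (∀ s : Multiset ℕ, mooreDigits k s = 0 ↔ MooreP k s) := by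
  have : NeZero k := ⟨by omega⟩
  refine ⟨fun s t => congrFun (mooreDigits_add s t), exists_mooreDigits_eq, fun s => ?_⟩
  exact (mooreP_iff_of_kernel (fun _ _ h hs => h.mooreDigits_ne_zero hs)
    (fun _ hs => exists_mooreMove_mooreDigits_eq_zero hs) s).symm
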